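/- arXiv:2403.12750 — 2 statements merged into one kernel-verified Lean document; each statement's English description precedes it below -/
import Mathlib

section
/- Let 𝕋 be a finite category, 𝕊 a replete full subcategory of 𝕋, and 𝒜 a pointed category with finite coproducts, kernels and cokernels in which, for every morphism f, the canonical morphism Cok(ker f) → Ker(cok f) is an epimorphism (equivalently, every morphism factors as an epimorphism followed by a normal monomorphism). Then for every functor F : 𝕋 → 𝒜 there exist a functor G : 𝕋 → 𝒜 lying in 𝔽 and a natural transformation η : F → G whose component η_T is a cokernel of [F(t)]_{t∈[T]} for every object T of 𝕋, and the kernel Ker(η) of η in 𝒜^𝕋 (computed pointwise) lies in 𝒯; consequently 0 → Ker(η) → F → G → 0 is a short exact sequence in 𝒜^𝕋 with torsion kernel and torsion-free quotient. -/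
open CategoryTheory Limits ZeroObject

universe w v u

namespace Paper

variable {𝕋 : Type v} [SmallCategory 𝕋] [FinCategory 𝕋]
variable {𝒜 : Type u} [Category.{w} 𝒜]

/-- Membership in the full subcategory `𝔽` of `𝒜^𝕋`: functors vanishing outside `𝕊`. -/
def memF (S : Set 𝕋) (F : 𝕋 ⥤ 𝒜) : Prop :=
  ∀ T : 𝕋, T ∉ S → IsZero (F.obj T)

/-- The index set `[T]` of morphisms `t : T' ⟶ T` with `T' ∉ 𝕊`. -/
def Idx (S : Set 𝕋) (T : 𝕋) : Type v :=
  { p : Σ T' : 𝕋, T' ⟶ T // p.1 ∉ S }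

instance (S : Set 𝕋) (T : 𝕋) : Finite (Idx S T) := by
  unfold Idx; infer_instance

/-- The canonical morphism `[F(t)]_{t ∈ [T]} : ⊕_{t ∈ [T]} F(dom t) ⟶ F(T)` induced
by the morphisms `F(t)` out of the finite coproduct. -/
noncomputable def canon (S : Set 𝕋) (F : 𝕋 ⥤ 𝒜) (T : 𝕋)
    [HasCoproduct (fun p : Idx S T => F.obj p.1.1)] :
    (∐ fun p : Idx S T => F.obj p.1.1) ⟶ F.obj T :=
  Sigma.desc fun p => F.map p.1.2

/-- Membership in the full subcategory `𝒯` of `𝒜^𝕋`: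
functors for which all the canonical morphisms `[F(t)]_{t ∈ [T]}` are epimorphisms. -/
def memT (S : Set 𝕋) (F : 𝕋 ⥤ 𝒜)
    [∀ T : 𝕋, HasCoproduct (fun p : Idx S T => F.obj p.1.1)] : Prop :=
  ∀ T : 𝕋, Epi (canon S F T)

/-- A quasi-abelian category: an additive category with kernels and cokernels in which
normal epimorphisms are stable under pullback and normal monomorphisms are stable
under pushout. -/
class QuasiAbelian (𝒜 : Type u) [Category.{w} 𝒜] [Preadditive 𝒜]
    [HasFiniteBiproducts 𝒜] [HasKernels 𝒜] [HasCokernels 𝒜] : Prop where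
  normalEpi_pullback_stable : ∀ {P X Y Z : 𝒜} (fst : P ⟶ X) (snd : P ⟶ Y)
    (g : X ⟶ Z) (f : Y ⟶ Z), IsPullback fst snd g f →
    Nonempty (NormalEpi f) → Nonempty (NormalEpi fst)
  normalMono_pushout_stable : ∀ {X Y Z P : 𝒜} (f : X ⟶ Y) (g : X ⟶ Z)
    (inl : Y ⟶ P) (inr : Z ⟶ P), IsPushout f g inl inr →
    Nonempty (NormalMono f) → Nonempty (NormalMono inr)

lemma epi_factorThruImage' [HasZeroMorphisms 𝒜] [HasKernels 𝒜] [HasCokernels 𝒜]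
    (hcoim : ∀ {X Y : 𝒜} (f : X ⟶ Y), Epi (Abelian.coimageImageComparison f))
    {X Y : 𝒜} (f : X ⟶ Y) : Epi (Abelian.factorThruImage f) := by
  have h : Abelian.coimage.π f ≫ Abelian.coimageImageComparison f =
      Abelian.factorThruImage f := by
    apply equalizer.hom_ext
    simp [Abelian.coimage_image_factorisation f]
  have := hcoim f
  rw [← h]
  exact epi_comp _ _

section Aux

set_option linter.unusedSectionVars false

variable [HasZeroObject 𝒜] [HasZeroMorphisms 𝒜] [HasFiniteCoproducts 𝒜]
    [HasKernels 𝒜] [HasCokernels 𝒜] (S : Set 𝕋) (F : 𝕋 ⥤ 𝒜)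

def Idx.comp {T T' : 𝕋} (p : Idx S T) (f : T ⟶ T') : Idx S T' :=
  ⟨⟨p.1.1, p.1.2 ≫ f⟩, p.2⟩

lemma canon_kill {T T' : 𝕋} (f : T ⟶ T') {Z : 𝒜} (g : F.obj T' ⟶ Z)
    (hg : canon S F T' ≫ g = 0) : canon S F T ≫ F.map f ≫ g = 0 := by
  ext p
  have h1 : Sigma.ι (fun p : Idx S T' => F.obj p.1.1) (p.comp S f) ≫ canon S F T' ≫ g = 0 := by
    rw [hg, comp_zero]
  simp [canon, Idx.comp, F.map_comp] at h1 ⊢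
  exact h1

noncomputable def Gfun : 𝕋 ⥤ 𝒜 where
  obj T := cokernel (canon S F T)
  map {T T'} f := cokernel.desc _ (F.map f ≫ cokernel.π _)
    (canon_kill S F f _ (cokernel.condition _))
  map_id T := by apply coequalizer.hom_ext; simp
  map_comp {T T' T''} f g := by apply coequalizer.hom_ext; simp

noncomputable def ηnat : F ⟶ Gfun S F where
  app T := cokernel.π (canon S F T)
  naturality {T T'} f := by simp [Gfun]

lemma η_w (T : 𝕋) : canon S F T ≫ (ηnat S F).app T = 0 := cokernel.condition _

noncomputable def Kfun : 𝕋 ⥤ 𝒜 where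
  obj T := kernel ((ηnat S F).app T)
  map {T T'} f := kernel.lift _ (kernel.ι _ ≫ F.map f) (by
    rw [Category.assoc, (ηnat S F).naturality, ← Category.assoc, kernel.condition, zero_comp])
  map_id T := by apply equalizer.hom_ext; simp
  map_comp {T T' T''} f g := by apply equalizer.hom_ext; simp

noncomputable def ιnat : Kfun S F ⟶ F where
  app T := kernel.ι _
  naturality {T T'} f := by simp [Kfun]

lemma ι_w : ιnat S F ≫ ηnat S F = 0 := by
  ext T
  simp [ιnat, kernel.condition]
  exact kernel.condition _

lemma memF_G : memF S (Gfun S F) := by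
  intro T hT
  have hepi : Epi (canon S F T) := by
    refine ⟨fun {Z} g h hgh => ?_⟩
    have := Sigma.ι (fun p : Idx S T => F.obj p.1.1) ⟨⟨T, 𝟙 T⟩, hT⟩ ≫= hgh
    simpa [canon] using this
  rw [IsZero.iff_id_eq_zero]
  have h0 : cokernel.π (canon S F T) = 0 := cokernel.π_of_epi _
  change 𝟙 (cokernel (canon S F T)) = 0
  rw [← cancel_epi (cokernel.π (canon S F T)), h0]
  simp [Gfun]

lemma iso_ι_app (T' : 𝕋) (hT' : T' ∉ S) : IsIso ((ιnat S F).app T') := by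
  have h0 : (ηnat S F).app T' = 0 := (memF_G S F T' hT').eq_of_tgt _ 0
  refine ⟨kernel.lift _ (𝟙 _) (by rw [Category.id_comp, h0]), ?_, ?_⟩
  · apply equalizer.hom_ext
    simp [ιnat]
    have e : kernel.lift ((ηnat S F).app T') (𝟙 (F.obj T')) (by rw [Category.id_comp, h0]) ≫
        kernel.ι ((ηnat S F).app T') = 𝟙 _ := kernel.lift_ι _ _ _
    exact (Category.assoc _ _ _).trans ((congrArg (kernel.ι _ ≫ ·) e).trans
      ((Category.comp_id _).trans (Category.id_comp _).symm))
  · simp [ιnat]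
    exact kernel.lift_ι _ _ _

/-- The canonical factorization `⊕ F(dom t) ⟶ K(T)` of `canon` through the kernel. -/
noncomputable def efac (T : 𝕋) : (∐ fun p : Idx S T => F.obj p.1.1) ⟶ (Kfun S F).obj T :=
  kernel.lift ((ηnat S F).app T) (canon S F T) (η_w S F T)

lemma efac_ι (T : 𝕋) : efac S F T ≫ (ιnat S F).app T = canon S F T :=
  kernel.lift_ι _ _ _

lemma epi_efac
    (hcoim : ∀ {X Y : 𝒜} (f : X ⟶ Y), Epi (Abelian.coimageImageComparison f))
    (T : 𝕋) : Epi (efac S F T) :=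
  epi_factorThruImage' hcoim (canon S F T)

lemma memT_K
    (hcoim : ∀ {X Y : 𝒜} (f : X ⟶ Y), Epi (Abelian.coimageImageComparison f)) :
    memT S (Kfun S F) := by
  intro T
  have hiso := fun p : Idx S T => iso_ι_app S F p.1.1 p.2
  let ψ : (∐ fun p : Idx S T => (Kfun S F).obj p.1.1) ≅ (∐ fun p : Idx S T => F.obj p.1.1) :=
    Sigma.mapIso (fun p => asIso ((ιnat S F).app p.1.1))
  haveI : Mono ((ιnat S F).app T) := inferInstanceAs (Mono (kernel.ι _))
  have key : ψ.inv ≫ canon S (Kfun S F) T = efac S F T := by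
    rw [← cancel_mono ((ιnat S F).app T)]
    ext p
    rw [efac_ι]
    have hnat := (ιnat S F).naturality p.1.2
    simp [ψ, canon, Sigma.ι_comp_map', reassoc_of% hnat]
  have := epi_efac S F hcoim T
  rw [← key] at this
  exact epi_of_epi ψ.inv _

end Aux


/-- Let `𝕋` be a finite category, `𝕊` a replete full subcategory and `𝒜` a
pointed category with finite coproducts, kernels and cokernels in which, for every morphism
`f`, the canonical morphism `Cok(ker f) ⟶ Ker(cok f)` is an epimorphism. Then every functor
`F : 𝕋 ⥤ 𝒜` admits a natural transformation `η : F ⟶ G` with `G ∈ 𝔽`, whose component at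
each `T` is a cokernel of `[F(t)]_{t∈[T]}`, whose kernel `K` lies in `𝒯`, and such that
`0 ⟶ K ⟶ F ⟶ G ⟶ 0` is a short exact sequence in `𝒜^𝕋`. -/
theorem torsion_torsionFree_sequence
    [HasZeroObject 𝒜] [HasZeroMorphisms 𝒜] [HasFiniteCoproducts 𝒜]
    [HasKernels 𝒜] [HasCokernels 𝒜]
    (hcoim : ∀ {X Y : 𝒜} (f : X ⟶ Y), Epi (Abelian.coimageImageComparison f))
    (S : Set 𝕋) (hS : ∀ ⦃X Y : 𝕋⦄, (X ≅ Y) → X ∈ S → Y ∈ S)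
    (F : 𝕋 ⥤ 𝒜) :
    ∃ (G : 𝕋 ⥤ 𝒜) (η : F ⟶ G) (w : ∀ T : 𝕋, canon S F T ≫ η.app T = 0),
      memF S G ∧
      (∀ T : 𝕋, Nonempty (IsColimit (CokernelCofork.ofπ (η.app T) (w T)))) ∧
      ∃ (K : 𝕋 ⥤ 𝒜) (ι : K ⟶ F) (wι : ι ≫ η = 0),
        memT S K ∧
        Nonempty (IsLimit (KernelFork.ofι ι wι)) ∧
        Nonempty (IsColimit (CokernelCofork.ofπ η wι)) := by
  refine ⟨Gfun S F, ηnat S F, η_w S F, memF_G S F,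
    fun T => ⟨cokernelIsCokernel _⟩,
    Kfun S F, ιnat S F, ι_w S F, memT_K S F hcoim, ⟨?_⟩, ⟨?_⟩⟩
  · -- kernel fork
    refine KernelFork.IsLimit.ofι _ _
      (fun {W} k hk =>
        { app := fun T => kernel.lift ((ηnat S F).app T) (k.app T)
            (by have := congrArg (fun α : W ⟶ Gfun S F => α.app T) hk; simpa using this)
          naturality := fun {T T'} f => by
            haveI : Mono ((ιnat S F).app T') := inferInstanceAs (Mono (kernel.ι _))
            rw [← cancel_mono ((ιnat S F).app T')]
            simp [ιnat, Kfun, k.naturality]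
            rw [kernel.lift_ι, kernel.lift_ι_assoc, k.naturality]
            · have := congrArg (fun α : W ⟶ Gfun S F => α.app T) hk; simpa using this
            · have := congrArg (fun α : W ⟶ Gfun S F => α.app T') hk; simpa using this })
      (fun {W} k hk => by ext T; simp [ιnat]; exact kernel.lift_ι _ _ _)
      (fun {W} k hk m hm => by
        ext T
        have := congrArg (fun α : W ⟶ F => α.app T) hm
        apply equalizer.hom_ext
        rw [kernel.lift_ι]
        · simp [ιnat] at this
          exact this
        · have := congrArg (fun α : W ⟶ Gfun S F => α.app T) hk; simpa using this)
  · -- cokernel cofork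
    refine CokernelCofork.IsColimit.ofπ _ _
      (fun {W} k hk =>
        { app := fun T => cokernel.desc (canon S F T) (k.app T)
            (by
              have h : (ιnat S F).app T ≫ k.app T = 0 := by
                have := congrArg (fun α : Kfun S F ⟶ W => α.app T) hk
                simpa using this
              rw [← efac_ι S F T, Category.assoc, h, comp_zero])
          naturality := fun {T T'} f => by
            haveI : Epi ((ηnat S F).app T) := inferInstanceAs (Epi (cokernel.π _))
            rw [← cancel_epi ((ηnat S F).app T)]
            simp [ηnat, Gfun, k.naturality] })
      (fun {W} k hk => by ext T; simp [ηnat]; exact cokernel.π_desc _ _ _)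
      (fun {W} k hk m hm => by
        ext T
        have := congrArg (fun α : F ⟶ W => α.app T) hm
        apply coequalizer.hom_ext
        simp [ηnat] at this ⊢
        exact this)

end Paper
end

section
/- Let 𝕋 be a finite category, 𝕊 a replete full subcategory of 𝕋, and 𝒜 a quasi-abelian category. Then the reflection 𝖥 : 𝒜^𝕋 → 𝔽 is semi-left exact: for every object B of 𝒜^𝕋, every object X of 𝔽 and every morphism φ : X → 𝖥(B) in 𝔽, the functor 𝖥 applied to the pullback square of the inclusion 𝖴(φ) along the unit component η_B : B → 𝖴𝖥(B) yields again a pullback square. In particular, the Galois structure (𝒜^𝕋, 𝔽, 𝖥, 𝖴, regular epimorphisms, regular epimorphisms) is admissible. -/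
open CategoryTheory Limits ZeroObject

universe w v u

namespace Paper

variable {𝕋 : Type v} [SmallCategory 𝕋] [FinCategory 𝕋]
variable {𝒜 : Type u} [Category.{w} 𝒜]

section Aux

set_option linter.unusedSectionVars false

variable [Preadditive 𝒜] [HasFiniteBiproducts 𝒜] [HasKernels 𝒜] [HasCokernels 𝒜]

instance : HasEqualizers 𝒜 := Preadditive.hasEqualizers_of_hasKernels
instance : HasCoequalizers 𝒜 := Preadditive.hasCoequalizers_of_hasCokernels
instance : HasFiniteLimits 𝒜 := hasFiniteLimits_of_hasEqualizers_and_finite_products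
instance : HasFiniteColimits 𝒜 := hasFiniteColimits_of_hasCoequalizers_and_finite_coproducts

variable (S : Set 𝕋) (B : 𝕋 ⥤ 𝒜)

lemma ι_canon (T : 𝕋) (p : Idx S T) :
    Sigma.ι (fun p : Idx S T => B.obj p.1.1) p ≫ canon S B T = B.map p.1.2 := by
  simp [canon]

lemma canon_comp_w {T T' : 𝕋} (t : T ⟶ T') :
    canon S B T ≫ (B.map t ≫ cokernel.π (canon S B T')) = 0 := by
  refine Sigma.hom_ext _ _ fun p => ?_
  rw [comp_zero, ← Category.assoc, ι_canon, ← Category.assoc, ← B.map_comp,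
    ← ι_canon S B T' ⟨⟨p.1.1, p.1.2 ≫ t⟩, p.2⟩, Category.assoc, cokernel.condition, comp_zero]

/-- The canonical reflection object `𝖥(B)`, defined pointwise as cokernels. -/
noncomputable def FObj : 𝕋 ⥤ 𝒜 where
  obj T := cokernel (canon S B T)
  map {T T'} t := cokernel.desc _ (B.map t ≫ cokernel.π _) (canon_comp_w S B t)
  map_id T := by
    rw [← cancel_epi (cokernel.π (canon S B T))]
    simp
  map_comp {T T' T''} t t' := by
    rw [← cancel_epi (cokernel.π (canon S B T))]
    simp

/-- The canonical projection `B ⟶ 𝖥(B)`, given pointwise by cokernel projections. -/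
noncomputable def ρ : B ⟶ FObj S B where
  app T := cokernel.π _
  naturality {T T'} t := by simp [FObj]

lemma memF_FObj : memF S (FObj S B) := by
  intro T hT
  have h1 : Sigma.ι (fun p : Idx S T => B.obj p.1.1) ⟨⟨T, 𝟙 T⟩, hT⟩ ≫ canon S B T = 𝟙 _ := by
    exact (ι_canon S B T ⟨⟨T, 𝟙 T⟩, hT⟩).trans (B.map_id T)
  have hπ : cokernel.π (canon S B T) = 0 := by
    rw [← Category.id_comp (cokernel.π (canon S B T)), ← h1, Category.assoc,
      cokernel.condition, comp_zero]
  rw [IsZero.iff_id_eq_zero]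
  refine (cancel_epi (cokernel.π (canon S B T))).1 ?_
  rw [hπ]
  exact zero_comp.trans zero_comp.symm

/-- `ρ` satisfies the universal property of the reflection onto `𝔽`. -/
lemma ρ_up {G : 𝕋 ⥤ 𝒜} (hG : memF S G) (f : B ⟶ G) :
    ∃! g : FObj S B ⟶ G, ρ S B ≫ g = f := by
  have hzero : ∀ T : 𝕋, canon S B T ≫ f.app T = 0 := by
    intro T
    refine Sigma.hom_ext _ _ fun p => ?_
    rw [comp_zero, ← Category.assoc, ι_canon, f.naturality]
    rw [(hG _ p.2).eq_zero_of_tgt (f.app p.1.1), zero_comp]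
  refine ⟨{ app := fun T => cokernel.desc _ (f.app T) (hzero T), naturality := ?_ }, ?_, ?_⟩
  · intro T T' t
    refine (cancel_epi (cokernel.π (canon S B T))).1 ?_
    show cokernel.π _ ≫ (FObj S B).map t ≫ _ = _
    simp [FObj, f.naturality]
  · ext T
    exact cokernel.π_desc _ _ _
  · intro g' hg'
    ext T
    refine (cancel_epi (cokernel.π (canon S B T))).1 ?_
    have := congrArg (fun m : B ⟶ G => m.app T) hg'
    simp [ρ] at this
    exact this.trans (cokernel.π_desc _ _ _).symm

/-- The quasi-abelian key fact: if `η` behaves like the cokernel of `u`, then the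
corestriction of `u` onto the kernel of `η` is an epimorphism. -/
lemma corestr_epi [QuasiAbelian 𝒜] {C B D : 𝒜} (u : C ⟶ B) (η : B ⟶ D) (hw : u ≫ η = 0)
    (hfac : ∀ {W : 𝒜} (h : B ⟶ W), u ≫ h = 0 → ∃ s, η ≫ s = h) :
    Epi (kernel.lift η u hw) := by
  apply Preadditive.epi_of_cancel_zero
  intro W z hz
  have sq := IsPushout.of_hasPushout (kernel.ι η) z
  have hnm : NormalMono (kernel.ι η) := ⟨D, η, kernel.condition η, kernelIsKernel η⟩
  obtain ⟨NM⟩ := QuasiAbelian.normalMono_pushout_stable _ _ _ _ sq ⟨hnm⟩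
  haveI : Mono (pushout.inr (kernel.ι η) z) := by haveI := NM; infer_instance
  have h0 : u ≫ pushout.inl (kernel.ι η) z = 0 := by
    rw [← kernel.lift_ι η u hw, Category.assoc, sq.w, ← Category.assoc, hz, zero_comp]
  obtain ⟨s, hs⟩ := hfac _ h0
  have hzr : z ≫ pushout.inr (kernel.ι η) z = 0 := by
    rw [← sq.w, ← hs, ← Category.assoc, kernel.condition, zero_comp]
  rwa [← cancel_mono (pushout.inr (kernel.ι η) z), zero_comp]

/-- The unit of any reflection onto `𝔽` agrees with the canonical projection `ρ`
up to a pointwise isomorphism. -/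
lemma unit_eq_comp_iso (R : (𝕋 ⥤ 𝒜) ⥤ ObjectProperty.FullSubcategory (memF (𝒜 := 𝒜) S))
    (adj : R ⊣ ObjectProperty.ι (memF S)) :
    ∃ θ : FObj S B ⟶ ((ObjectProperty.ι (memF S)).obj (R.obj B)),
      (∀ T, IsIso (θ.app T)) ∧ ρ S B ≫ θ = adj.unit.app B := by
  obtain ⟨θ, hθ, -⟩ := ρ_up S B (R.obj B).property (adj.unit.app B)
  let FF : ObjectProperty.FullSubcategory (memF (𝒜 := 𝒜) S) := ⟨FObj S B, memF_FObj S B⟩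
  let ψ : R.obj B ⟶ FF := (adj.homEquiv B FF).symm (ρ S B)
  have hψ : adj.unit.app B ≫ (ObjectProperty.ι (memF S)).map ψ = ρ S B := by
    have h := (adj.homEquiv B FF).apply_symm_apply (ρ S B)
    rwa [Adjunction.homEquiv_unit] at h
  have h1 : θ ≫ (ObjectProperty.ι (memF S)).map ψ = 𝟙 (FObj S B) := by
    obtain ⟨g₀, hg₀, huniq⟩ := ρ_up S B (memF_FObj S B) (ρ S B)
    have e1 := huniq (θ ≫ (ObjectProperty.ι (memF S)).map ψ)
      (by show ρ S B ≫ _ = ρ S B; rw [← Category.assoc, hθ, hψ])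
    have e2 := huniq (𝟙 _) (Category.comp_id _)
    rw [e1, e2]
  have h2 : ψ ≫ (ObjectProperty.homMk θ : FF ⟶ R.obj B) = 𝟙 (R.obj B) := by
    apply (adj.homEquiv B (R.obj B)).injective
    rw [Adjunction.homEquiv_unit, Adjunction.homEquiv_unit, Functor.map_comp]
    show adj.unit.app B ≫ (ObjectProperty.ι (memF S)).map ψ ≫ θ =
      adj.unit.app B ≫ 𝟙 _
    rw [Category.comp_id, ← Category.assoc, hψ, hθ]
  have h2' : (ObjectProperty.ι (memF S)).map ψ ≫ θ =
      𝟙 ((ObjectProperty.ι (memF S)).obj (R.obj B)) := by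
    have := congrArg (fun m => (ObjectProperty.ι (memF S)).map m) h2
    simpa using this
  refine ⟨θ, fun T => ?_, hθ⟩
  refine ⟨((ObjectProperty.ι (memF S)).map ψ).app T, ?_, ?_⟩
  · have := congrArg (fun m : FObj S B ⟶ FObj S B => m.app T) h1
    simpa using this
  · have := congrArg (fun m : (_ : 𝕋 ⥤ 𝒜) ⟶ _ => m.app T) h2'
    simpa using this

end Aux

/-- Let `𝕋` be a finite category, `𝕊` a replete full subcategory and `𝒜`
quasi-abelian. The reflection `𝖥 : 𝒜^𝕋 ⟶ 𝔽` (i.e. any left adjoint `R` of the inclusion)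
is semi-left exact: for every `B` in `𝒜^𝕋`, every `X` in `𝔽` and every morphism
`φ : X ⟶ R(B)`, applying `R` to any pullback square of `𝖴(φ)` along the unit component
`η_B` yields again a pullback square. In particular the induced Galois structure is
admissible. -/
theorem reflection_semiLeftExact
    [Preadditive 𝒜] [HasFiniteBiproducts 𝒜] [HasKernels 𝒜] [HasCokernels 𝒜]
    [QuasiAbelian 𝒜]
    (S : Set 𝕋) (hS : ∀ ⦃X Y : 𝕋⦄, (X ≅ Y) → X ∈ S → Y ∈ S)
    (R : (𝕋 ⥤ 𝒜) ⥤ ObjectProperty.FullSubcategory (memF (𝒜 := 𝒜) S))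
    (adj : R ⊣ ObjectProperty.ι (memF S)) :
    ∀ (B : 𝕋 ⥤ 𝒜) (X : ObjectProperty.FullSubcategory (memF (𝒜 := 𝒜) S)) (φ : X ⟶ R.obj B)
      {P : 𝕋 ⥤ 𝒜} (p₁ : P ⟶ B) (p₂ : P ⟶ (ObjectProperty.ι (memF S)).obj X),
      IsPullback p₁ p₂ (adj.unit.app B) ((ObjectProperty.ι (memF S)).map φ) →
      IsPullback (R.map p₁) (R.map p₂) (R.map (adj.unit.app B))
        (R.map ((ObjectProperty.ι (memF S)).map φ)) := by
  intro B X φ P p₁ p₂ hpb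
  classical
  obtain ⟨θ, hθiso, hθ⟩ := unit_eq_comp_iso S B R adj
  -- pointwise facts about the unit η := adj.unit.app B
  have ηfac : ∀ T, (adj.unit.app B).app T = cokernel.π (canon S B T) ≫ θ.app T := by
    intro T; rw [← hθ]; rfl
  have ηepi : ∀ T, Epi ((adj.unit.app B).app T) := by
    intro T; rw [ηfac]; haveI := hθiso T; exact epi_comp' inferInstance (@IsIso.epi_of_iso _ _ _ _ _ (hθiso T))
  have ηw : ∀ T, canon S B T ≫ (adj.unit.app B).app T = 0 := by
    intro T; rw [ηfac]
    exact (Category.assoc _ _ _).symm.trans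
      ((congrArg (fun m => m ≫ θ.app T) (cokernel.condition (canon S B T))).trans zero_comp)
  have ηdesc : ∀ (T : 𝕋) {W : 𝒜} (h : B.obj T ⟶ W), canon S B T ≫ h = 0 →
      ∃ s, (adj.unit.app B).app T ≫ s = h := by
    intro T W h h0
    haveI := hθiso T
    refine ⟨inv (θ.app T) ≫ cokernel.desc _ h h0, ?_⟩
    rw [ηfac]
    exact (Category.assoc _ _ _).trans ((congrArg (fun m => cokernel.π (canon S B T) ≫ m)
      (IsIso.hom_inv_id_assoc (θ.app T) _)).trans (cokernel.π_desc _ _ _))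
  have ηnormal : ∀ T, Nonempty (NormalEpi ((adj.unit.app B).app T)) := by
    intro T
    haveI := ηepi T
    exact ⟨{ W := _
             g := canon S B T
             w := ηw T
             isColimit := CokernelCofork.IsColimit.ofπ' ((adj.unit.app B).app T) (ηw T)
               (fun k hk => ⟨(ηdesc T k hk).choose, (ηdesc T k hk).choose_spec⟩) }⟩
  -- pointwise pullback squares
  have hpbT : ∀ T, IsPullback (p₁.app T) (p₂.app T) ((adj.unit.app B).app T)
      (((ObjectProperty.ι (memF S)).map φ).app T) := by
    intro T
    have := ((evaluation 𝕋 𝒜).obj T).map_isPullback hpb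
    simpa using this
  -- the universal property of p₂ : P ⟶ U X
  have up : ∀ (G : 𝕋 ⥤ 𝒜), memF S G → ∀ f : P ⟶ G, ∃! g : X.obj ⟶ G, p₂ ≫ g = f := by
    intro G hG f
    have hNE : ∀ T, Nonempty (NormalEpi (p₂.app T)) := fun T =>
      QuasiAbelian.normalEpi_pullback_stable _ _ _ _ (hpbT T).flip (ηnormal T)
    let N : ∀ T, NormalEpi (p₂.app T) := fun T => Classical.choice (hNE T)
    -- cancellation along p₂.app T
    have cancel : ∀ (T : 𝕋) {W : 𝒜} (m m' : X.obj.obj T ⟶ W),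
        p₂.app T ≫ m = p₂.app T ≫ m' → m = m' := by
      intro T W m m' h
      exact Cofork.IsColimit.hom_ext (N T).isColimit (by simpa using h)
    -- the kernel-type object of η.app T, lifted into P
    have hkill : ∀ T, (N T).g ≫ f.app T = 0 := by
      intro T
      have κw : kernel.ι ((adj.unit.app B).app T) ≫ (adj.unit.app B).app T =
          (0 : kernel ((adj.unit.app B).app T) ⟶ _) ≫
            ((ObjectProperty.ι (memF S)).map φ).app T := by
        rw [kernel.condition, zero_comp]
      have uw : canon S B T ≫ (adj.unit.app B).app T =
          (0 : _ ⟶ X.obj.obj T) ≫ ((ObjectProperty.ι (memF S)).map φ).app T := by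
        rw [ηw, zero_comp]
      set κbar := (hpbT T).lift (kernel.ι ((adj.unit.app B).app T)) 0 κw with hκbar
      set ubar := (hpbT T).lift (canon S B T) 0 uw with hubar
      -- the corestriction e of canon onto the kernel of η.app T
      set e := kernel.lift ((adj.unit.app B).app T) (canon S B T) (ηw T) with he
      have heepi : Epi e := corestr_epi _ _ (ηw T) (fun h h0 => ηdesc T h h0)
      have h_eκ : e ≫ κbar = ubar := by
        refine (hpbT T).hom_ext ?_ ?_
        · rw [Category.assoc, hκbar, (hpbT T).lift_fst, kernel.lift_ι, hubar,
            (hpbT T).lift_fst]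
        · rw [Category.assoc, hκbar, (hpbT T).lift_snd, comp_zero, hubar,
            (hpbT T).lift_snd]
      -- ubar kills f
      have hubarf : ubar ≫ f.app T = 0 := by
        refine Sigma.hom_ext _ _ fun p => ?_
        have hz1 : IsZero (X.obj.obj p.1.1) := X.property _ p.2
        have hz2 : IsZero (((ObjectProperty.ι (memF S)).obj (R.obj B)).obj p.1.1) :=
          (R.obj B).property _ p.2
        have hp₂dt : p₂.app p.1.1 = 0 := hz1.eq_zero_of_tgt _
        have hφiso : IsIso (((ObjectProperty.ι (memF S)).map φ).app p.1.1) :=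
          ⟨0, hz1.eq_of_src _ _, hz2.eq_of_src _ _⟩
        have hp₁iso : IsIso (p₁.app p.1.1) := by
          refine ⟨(hpbT p.1.1).lift (𝟙 _)
            ((adj.unit.app B).app p.1.1 ≫
              inv (((ObjectProperty.ι (memF S)).map φ).app p.1.1)) (by simp), ?_, ?_⟩
          · refine (hpbT p.1.1).hom_ext ?_ ?_
            · rw [Category.assoc, (hpbT p.1.1).lift_fst, Category.comp_id, Category.id_comp]
            · rw [Category.assoc, (hpbT p.1.1).lift_snd, Category.id_comp,
                ← Category.assoc, (hpbT p.1.1).w, Category.assoc, IsIso.hom_inv_id,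
                Category.comp_id]
          · exact (hpbT p.1.1).lift_fst _ _ _
        have key : Sigma.ι (fun p : Idx S T => B.obj p.1.1) p ≫ ubar =
            inv (p₁.app p.1.1) ≫ P.map p.1.2 := by
          refine (hpbT T).hom_ext ?_ ?_
          · rw [Category.assoc, hubar, (hpbT T).lift_fst, ι_canon, Category.assoc,
              p₁.naturality, IsIso.inv_hom_id_assoc]
          · rw [Category.assoc, hubar, (hpbT T).lift_snd, comp_zero, Category.assoc,
              p₂.naturality, hp₂dt, zero_comp, comp_zero]
        rw [comp_zero, ← Category.assoc, key, Category.assoc, f.naturality,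
          (hG _ p.2).eq_zero_of_tgt (f.app p.1.1), zero_comp, comp_zero]
      -- κbar kills f
      have hκf : κbar ≫ f.app T = 0 := by
        haveI := heepi
        rw [← cancel_epi e, ← Category.assoc, h_eκ, hubarf, comp_zero]
      -- (N T).g factors through κbar
      have hNgw : ((N T).g ≫ p₁.app T) ≫ (adj.unit.app B).app T = 0 := by
        rw [Category.assoc, (hpbT T).w, ← Category.assoc, (N T).w, zero_comp]
      have hNκ : (N T).g = kernel.lift ((adj.unit.app B).app T) ((N T).g ≫ p₁.app T)
          (by rw [Category.assoc] at hNgw ⊢; exact hNgw) ≫ κbar := by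
        refine (hpbT T).hom_ext ?_ ?_
        · rw [Category.assoc, hκbar, (hpbT T).lift_fst, kernel.lift_ι]
        · rw [Category.assoc, hκbar, (hpbT T).lift_snd, comp_zero, (N T).w]
      rw [hNκ, Category.assoc, hκf, comp_zero]
    -- construct the factorization g
    have fac : ∀ T, ∃ gT : X.obj.obj T ⟶ G.obj T, p₂.app T ≫ gT = f.app T := by
      intro T
      obtain ⟨l, hl⟩ := CokernelCofork.IsColimit.desc' (N T).isColimit (f.app T) (hkill T)
      exact ⟨l, by simpa using hl⟩
    refine ⟨{ app := fun T => (fac T).choose, naturality := ?_ }, ?_, ?_⟩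
    · intro T T' t
      apply cancel T
      show p₂.app T ≫ ((ObjectProperty.ι (memF S)).obj X).map t ≫ (fac T').choose =
        p₂.app T ≫ (fac T).choose ≫ G.map t
      rw [← Category.assoc, ← p₂.naturality, Category.assoc, (fac T').choose_spec,
        ← Category.assoc, (fac T).choose_spec, f.naturality]
    · ext T
      exact (fac T).choose_spec
    · intro g' hg'
      ext T
      refine cancel T _ _ ?_
      show p₂.app T ≫ g'.app T = p₂.app T ≫ (fac T).choose
      rw [(fac T).choose_spec]
      exact congrArg (fun m : P ⟶ G => m.app T) hg'
  -- the formal part: reflections of objects with the universal property are isos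
  have upI : ∀ (Z : ObjectProperty.FullSubcategory (memF (𝒜 := 𝒜) S)) (Y : 𝕋 ⥤ 𝒜)
      (q : Y ⟶ (ObjectProperty.ι (memF S)).obj Z),
      (∀ G : 𝕋 ⥤ 𝒜, memF S G → ∀ f : Y ⟶ G, ∃! g : Z.obj ⟶ G, q ≫ g = f) →
      IsIso ((adj.homEquiv Y Z).symm q) := by
    intro Z Y q hq
    obtain ⟨g, hg, -⟩ := hq _ (R.obj Y).property (adj.unit.app Y)
    have hψq : adj.unit.app Y ≫
        (ObjectProperty.ι (memF S)).map ((adj.homEquiv Y Z).symm q) = q := by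
      have h := (adj.homEquiv Y Z).apply_symm_apply q
      rwa [Adjunction.homEquiv_unit] at h
    refine ⟨ObjectProperty.homMk g, ?_, ?_⟩
    · apply (adj.homEquiv Y (R.obj Y)).injective
      rw [Adjunction.homEquiv_unit, Adjunction.homEquiv_unit, Functor.map_comp]
      show adj.unit.app Y ≫
        (ObjectProperty.ι (memF S)).map ((adj.homEquiv Y Z).symm q) ≫ g =
        adj.unit.app Y ≫ 𝟙 _
      rw [Category.comp_id, ← Category.assoc, hψq, hg]
    · obtain ⟨g₀, -, huniq⟩ := hq Z.obj Z.property q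
      have e1 := huniq
        (g ≫ (ObjectProperty.ι (memF S)).map ((adj.homEquiv Y Z).symm q))
        (by show q ≫ _ = q; rw [← Category.assoc, hg]; exact hψq)
      have e2 := huniq (𝟙 _) (Category.comp_id _)
      apply (ObjectProperty.ι (memF S)).map_injective
      exact e1.trans e2.symm
  -- counit components are isos
  have hcounit : ∀ Z : ObjectProperty.FullSubcategory (memF (𝒜 := 𝒜) S), IsIso (adj.counit.app Z) := by
    intro Z
    have h := upI Z ((ObjectProperty.ι (memF S)).obj Z) (𝟙 _)
      (fun G hG f => ⟨f, Category.id_comp f, fun g' hg' => by simpa using hg'⟩)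
    have heq : (adj.homEquiv ((ObjectProperty.ι (memF S)).obj Z) Z).symm (𝟙 _) =
        adj.counit.app Z := by
      rw [Adjunction.homEquiv_counit, R.map_id, Category.id_comp]
    rwa [heq] at h
  -- R.map p₂ is an iso
  have hRp₂ : IsIso (R.map p₂) := by
    have h := upI X P p₂ up
    rw [Adjunction.homEquiv_counit] at h
    haveI := hcounit X
    haveI := h
    exact IsIso.of_isIso_comp_right (R.map p₂) (adj.counit.app X)
  -- R.map η is an iso
  have hRη : IsIso (R.map (adj.unit.app B)) := by
    haveI := hcounit (R.obj B)
    haveI : IsIso (R.map (adj.unit.app B) ≫ adj.counit.app (R.obj B)) := by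
      rw [adj.left_triangle_components B]
      exact IsIso.id _
    exact IsIso.of_isIso_comp_right (R.map (adj.unit.app B)) (adj.counit.app (R.obj B))
  haveI := hRp₂
  haveI := hRη
  exact IsPullback.of_vert_isIso
    ⟨by rw [← Functor.map_comp, ← Functor.map_comp, hpb.w]⟩

end Paper
end
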